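/- arXiv:1712.07072 — 6 statements merged into one kernel-verified Lean document; each statement's English description precedes it below -/
import Mathlib

section
/- Let F be a connected graph with f vertices and at least one edge, and let k ≥ 1. For n ≥ k·f, every n-vertex graph with no k pairwise vertex-disjoint copies of F has at most ex(n-(k-1)f, F) + C((k-1)f, 2) + (k-1)·f·(n-(k-1)f) edges, where ex(m, F) denotes the maximum number of edges of an m-vertex F-free graph and C(a,2) = a(a-1)/2. -/
open SimpleGraph

universe u v

/-- An (injective) copy of the graph `F` inside the graph `G`. -/
structure GraphCopy {α : Type u} {β : Type v} (F : SimpleGraph α) (G : SimpleGraph β) where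
  toFun : α → β
  inj : Function.Injective toFun
  adj : ∀ {a b : α}, F.Adj a b → G.Adj (toFun a) (toFun b)

/-- `G` contains a copy of `F` (i.e. a subgraph isomorphic to `F`). -/
def Contains {α : Type u} {β : Type v} (F : SimpleGraph α) (G : SimpleGraph β) : Prop :=
  Nonempty (GraphCopy F G)

/-- `G` contains `k` pairwise vertex-disjoint copies of `F`. -/
def HasDisjCopies {α : Type u} {β : Type v} (F : SimpleGraph α) (G : SimpleGraph β)
    (k : ℕ) : Prop :=
  ∃ c : Fin k → GraphCopy F G,
    ∀ i j : Fin k, i ≠ j → Disjoint (Set.range (c i).toFun) (Set.range (c j).toFun)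

/-- The join of two graphs: their disjoint union together with all cross edges. -/
def gJoin {α : Type u} {β : Type v} (G : SimpleGraph α) (H : SimpleGraph β) :
    SimpleGraph (α ⊕ β) where
  Adj x y :=
    match x, y with
    | Sum.inl a, Sum.inl b => G.Adj a b
    | Sum.inr a, Sum.inr b => H.Adj a b
    | _, _ => True
  symm := ⟨by rintro (a | a) (b | b) h <;> first | exact h.symm | trivial⟩
  loopless := ⟨by rintro (a | a) h; exacts [G.loopless.irrefl a h, H.loopless.irrefl a h]⟩

/-- The Turán number: maximum number of edges of an `n`-vertex `F`-free graph. -/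
noncomputable def exNum {α : Type u} (n : ℕ) (F : SimpleGraph α) : ℕ :=
  sSup {m : ℕ | ∃ G : SimpleGraph (Fin n), ¬ Contains F G ∧ m = G.edgeSet.ncard}

/-- The number of (unlabeled) copies of `H` in `G`, i.e. the number of subgraphs of `G`
isomorphic to `H`. -/
noncomputable def copyCount {α : Type u} {β : Type v} (H : SimpleGraph α)
    (G : SimpleGraph β) : ℕ :=
  {A : G.Subgraph | Nonempty (H ≃g A.coe)}.ncard

/-- The generalized Turán number: maximum number of copies of `H` in an
`n`-vertex `F`-free graph. -/
noncomputable def exGen {α : Type u} {γ : Type v} (n : ℕ) (H : SimpleGraph α)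
    (F : SimpleGraph γ) : ℕ :=
  sSup {m : ℕ | ∃ G : SimpleGraph (Fin n), ¬ Contains F G ∧ m = copyCount H G}

/-- `s` is a matching in `G`: a set of edges of `G`, pairwise vertex-disjoint. -/
def IsMatchingSet {V : Type u} (G : SimpleGraph V) (s : Finset (Sym2 V)) : Prop :=
  ↑s ⊆ G.edgeSet ∧ ∀ e ∈ s, ∀ f ∈ s, e ≠ f → ∀ x : V, x ∈ e → x ∉ f

/-- The number of matchings of size `l` in `G`. -/
noncomputable def matchCount {V : Type u} (G : SimpleGraph V) (l : ℕ) : ℕ :=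
  {s : Finset (Sym2 V) | s.card = l ∧ IsMatchingSet G s}.ncard

/-- `G` contains `k` pairwise vertex-disjoint triangles. -/
def HasDisjTriangles {V : Type u} (G : SimpleGraph V) (k : ℕ) : Prop :=
  ∃ S : Finset (Finset V), S.card = k ∧ (∀ T ∈ S, G.IsNClique 3 T) ∧
    (S : Set (Finset V)).Pairwise fun T T' => Disjoint T T'

/-- The number of copies of `lK₃` (families of `l` pairwise disjoint triangles) in `G`. -/
noncomputable def disjTriFamCount {V : Type u} (G : SimpleGraph V) (l : ℕ) : ℕ :=
  {S : Finset (Finset V) | S.card = l ∧ (∀ T ∈ S, G.IsNClique 3 T) ∧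
    (S : Set (Finset V)).Pairwise fun T T' => Disjoint T T'}.ncard

/-! A maximal family of pairwise disjoint copies of `F` has at most `k - 1` members, so the at
most `(k - 1) f` vertices it covers meet every copy of `F`; pad them to a set `S` of exactly
`(k - 1) f` vertices. Then `G - S` is `F`-free and has at most `ex(n - (k - 1) f, F)` edges, at
most `C((k - 1) f, 2)` edges lie inside `S`, and at most `(k - 1) f (n - (k - 1) f)` edges join
`S` to its complement. -/

variable {α : Type u} {β : Type v} {F : SimpleGraph α}

def GraphCopy.comp {γ : Type*} {G : SimpleGraph β} {H : SimpleGraph γ}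
    (φ : GraphCopy F G) (e : G ↪g H) : GraphCopy F H where
  toFun := e ∘ φ.toFun
  inj := e.injective.comp φ.inj
  adj h := e.map_adj_iff.mpr (φ.adj h)

lemma Contains.comp {γ : Type*} {G : SimpleGraph β} {H : SimpleGraph γ}
    (h : Contains F G) (e : G ↪g H) : Contains F H :=
  h.map (·.comp e)

lemma hasDisjCopies_zero (G : SimpleGraph β) : HasDisjCopies F G 0 :=
  ⟨Fin.elim0, fun i => i.elim0⟩

lemma HasDisjCopies.snoc {G : SimpleGraph β} {t : ℕ} (c : Fin t → GraphCopy F G)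
    (hc : ∀ i j : Fin t, i ≠ j → Disjoint (Set.range (c i).toFun) (Set.range (c j).toFun))
    (φ : GraphCopy F G) (hφ : ∀ i, Disjoint (Set.range (c i).toFun) (Set.range φ.toFun)) :
    HasDisjCopies F G (t + 1) := by
  refine ⟨Fin.lastCases φ c, fun i j => ?_⟩
  induction i using Fin.lastCases with
  | last =>
    induction j using Fin.lastCases with
    | last => exact fun h => (h rfl).elim
    | cast j => exact fun _ => by simpa using (hφ j).symm
  | cast i =>
    induction j using Fin.lastCases with
    | last => exact fun _ => by simpa using hφ i
    | cast j => simpa using hc i j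

lemma ncard_edgeSet_le_exNum [Fintype α] {V : Type*} [Fintype V] {G : SimpleGraph V}
    (hfree : ¬ Contains F G) : G.edgeSet.ncard ≤ exNum (Fintype.card V) F := by
  let e := G.overFinIso rfl
  have hbdd : BddAbove {m : ℕ | ∃ H : SimpleGraph (Fin (Fintype.card V)),
      ¬ Contains F H ∧ m = H.edgeSet.ncard} :=
    ((Set.finite_range fun H : SimpleGraph (Fin (Fintype.card V)) => H.edgeSet.ncard).subset
      (by rintro m ⟨H, -, rfl⟩; exact ⟨H, rfl⟩)).bddAbove
  refine le_csSup hbdd ⟨_, fun h => hfree (h.comp e.symm.toEmbedding), ?_⟩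
  rw [← Nat.card_coe_set_eq, ← Nat.card_coe_set_eq]
  exact Nat.card_congr e.mapEdgeSet

lemma ncard_edgeSet_le_induce_compl_add {V : Type*} [Fintype V] [DecidableEq V]
    (G : SimpleGraph V) (S : Finset V) :
    G.edgeSet.ncard ≤ (G.induce (↑Sᶜ : Set V)).edgeSet.ncard + S.card.choose 2
      + S.card * Sᶜ.card := by
  classical
  have hcover : G.edgeSet ⊆ Sym2.map Subtype.val '' (G.induce (↑Sᶜ : Set V)).edgeSet
      ∪ Sym2.map Subtype.val '' (G.induce (↑S : Set V)).edgeSet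
      ∪ (fun z : V × V => s(z.1, z.2)) '' (↑(S ×ˢ Sᶜ) : Set (V × V)) := by
    intro e he
    induction e using Sym2.ind with
    | _ a b =>
      by_cases ha : a ∈ S <;> by_cases hb : b ∈ S
      · exact .inl (.inr ⟨s(⟨a, ha⟩, ⟨b, hb⟩), he, rfl⟩)
      · exact .inr ⟨(a, b), by simp [ha, hb], rfl⟩
      · exact .inr ⟨(b, a), by simp [ha, hb], Sym2.eq_swap⟩
      · exact .inl (.inl ⟨s(⟨a, by simpa using ha⟩, ⟨b, by simpa using hb⟩), he, rfl⟩)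
  have hinside : (G.induce (↑S : Set V)).edgeSet.ncard ≤ S.card.choose 2 := by
    rw [Set.ncard_eq_toFinset_card', Set.toFinset_card, SimpleGraph.card_edgeSet]
    simpa using (G.induce (↑S : Set V)).card_edgeFinset_le_card_choose_two
  calc G.edgeSet.ncard
      ≤ (Sym2.map Subtype.val '' (G.induce (↑Sᶜ : Set V)).edgeSet).ncard
        + (Sym2.map Subtype.val '' (G.induce (↑S : Set V)).edgeSet).ncard
        + ((fun z : V × V => s(z.1, z.2)) '' (↑(S ×ˢ Sᶜ) : Set (V × V))).ncard :=
        (Set.ncard_le_ncard hcover).trans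
          ((Set.ncard_union_le _ _).trans (by gcongr; exact Set.ncard_union_le _ _))
    _ ≤ (G.induce (↑Sᶜ : Set V)).edgeSet.ncard + S.card.choose 2 + S.card * Sᶜ.card := by
        gcongr
        · exact Set.ncard_image_le
        · exact le_trans Set.ncard_image_le hinside
        · exact le_trans Set.ncard_image_le (by rw [Set.ncard_coe_finset, Finset.card_product])

def IsCopyTransversal {V : Type*} (F : SimpleGraph α) (G : SimpleGraph V) (S : Finset V) :
    Prop :=
  ∀ φ : GraphCopy F G, ∃ a, φ.toFun a ∈ S

lemma IsCopyTransversal.mono {V : Type*} {G : SimpleGraph V} {S T : Finset V}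
    (h : IsCopyTransversal F G S) (hST : S ⊆ T) : IsCopyTransversal F G T :=
  fun φ => (h φ).imp fun _ ha => hST ha

lemma exists_isCopyTransversal_of_not_hasDisjCopies [Fintype α] {V : Type*} [DecidableEq V]
    {G : SimpleGraph V} {k : ℕ} (hfree : ¬ HasDisjCopies F G k) :
    ∃ S : Finset V, S.card ≤ (k - 1) * Fintype.card α ∧ IsCopyTransversal F G S := by
  classical
  have hk : k ≠ 0 := by rintro rfl; exact hfree (hasDisjCopies_zero G)
  set t := Nat.findGreatest (HasDisjCopies F G) (k - 1)
  have htk : t ≤ k - 1 := Nat.findGreatest_le _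
  have hmax : ¬ HasDisjCopies F G (t + 1) := by
    rcases htk.lt_or_eq with h | h
    · exact Nat.findGreatest_is_greatest (Nat.lt_succ_self t) h
    · rwa [h, Nat.sub_add_cancel (Nat.one_le_iff_ne_zero.mpr hk)]
  obtain ⟨c, hc⟩ : HasDisjCopies F G t :=
    Nat.findGreatest_spec (Nat.zero_le _) (hasDisjCopies_zero G)
  refine ⟨Finset.univ.biUnion fun i => Finset.univ.image (c i).toFun, ?_, ?_⟩
  · calc _ ≤ ∑ i : Fin t, (Finset.univ.image (c i).toFun).card := Finset.card_biUnion_le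
      _ ≤ ∑ _i : Fin t, Fintype.card α := Finset.sum_le_sum fun _ _ => Finset.card_image_le
      _ ≤ (k - 1) * Fintype.card α := by simpa using Nat.mul_le_mul_right _ htk
  · intro φ
    by_contra! hφ
    refine hmax (HasDisjCopies.snoc c hc φ fun i => Set.disjoint_left.mpr ?_)
    rintro _ ⟨a, rfl⟩ ⟨b, hb⟩
    exact hφ b (Finset.mem_biUnion.mpr ⟨i, by simp, Finset.mem_image.mpr ⟨a, by simp, hb.symm⟩⟩)

lemma IsCopyTransversal.ncard_edgeSet_le [Fintype α] {V : Type*} [Fintype V] [DecidableEq V]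
    {G : SimpleGraph V} {S : Finset V} (hS : IsCopyTransversal F G S) :
    G.edgeSet.ncard ≤ exNum (Fintype.card V - S.card) F + S.card.choose 2
      + S.card * (Fintype.card V - S.card) := by
  have hfree : ¬ Contains F (G.induce (↑Sᶜ : Set V)) := by
    rintro ⟨φ⟩
    obtain ⟨a, ha⟩ := hS (φ.comp (Embedding.induce _))
    exact Finset.mem_compl.mp (φ.toFun a).2 ha
  have houtside := ncard_edgeSet_le_exNum hfree
  have hcard : Fintype.card (↑Sᶜ : Set V) = Sᶜ.card := Fintype.card_coe _
  rw [hcard] at houtside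
  rw [← Finset.card_compl]
  exact (ncard_edgeSet_le_induce_compl_add G S).trans (by gcongr)

theorem stmt1_general {α : Type u} [Fintype α] (F : SimpleGraph α)
    (f k n : ℕ) (hf : f = Fintype.card α)
    (hn : k * f ≤ n) (G : SimpleGraph (Fin n)) (hfree : ¬ HasDisjCopies F G k) :
    G.edgeSet.ncard ≤
      exNum (n - (k - 1) * f) F + ((k - 1) * f).choose 2
        + (k - 1) * f * (n - (k - 1) * f) := by
  obtain ⟨S₀, hS₀card, hS₀⟩ := exists_isCopyTransversal_of_not_hasDisjCopies hfree
  have hmn : (k - 1) * f ≤ n := (Nat.mul_le_mul_right f (Nat.sub_le k 1)).trans hn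
  obtain ⟨S, hS₀S, -, hScard⟩ := Finset.exists_subsuperset_card_eq (Finset.subset_univ S₀)
    (hf ▸ hS₀card) (by simpa using hmn)
  simpa [hScard] using (hS₀.mono hS₀S).ncard_edgeSet_le

/-- Gorgol's bound. -/
theorem stmt1 {α : Type u} [Fintype α] (F : SimpleGraph α) (hconn : F.Connected)
    (hF : ∃ a b : α, F.Adj a b) (f k n : ℕ) (hf : f = Fintype.card α) (hk : 1 ≤ k)
    (hn : k * f ≤ n) (G : SimpleGraph (Fin n)) (hfree : ¬ HasDisjCopies F G k) :
    G.edgeSet.ncard ≤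
      exNum (n - (k - 1) * f) F + ((k - 1) * f).choose 2
        + (k - 1) * f * (n - (k - 1) * f) :=
  stmt1_general F f k n hf hn G hfree
end

section
/- Let F_1, ..., F_k be graphs, each with at least one edge, and let F be their vertex-disjoint union. There exists a constant C (depending on the F_i only) such that for all n, every n-vertex F-free graph has at most max_{1≤i≤k} ex(n, F_i) + C·n edges. -/
open SimpleGraph

universe u v

/-!
Embed `F₁, F₂, …` one after another into `G`, each copy avoiding the vertices used so far.
As `G` is `F`-free this gets stuck at some `Fⱼ`: there is a set `S` of at most
`M = ∑ |V(Fᵢ)|` vertices such that no copy of `Fⱼ` avoids `S`. Removing the at most `M n`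
edges at `S` then leaves an `Fⱼ`-free graph, so `e(G) ≤ ex(n, Fⱼ) + M n`. A copy of `Fⱼ` in
the remaining graph could only meet `S` in isolated vertices, which can be moved out of `S`
once `n ≥ 3M`; for smaller `n` the trivial bound `e(G) ≤ n² ≤ 3M n` suffices.
-/

lemma ncard_edgeSet_le_exNum_s5 {α : Type u} {n : ℕ} (F : SimpleGraph α) (H : SimpleGraph (Fin n))
    (h : ¬ Contains F H) : H.edgeSet.ncard ≤ exNum n F :=
  le_csSup ⟨Nat.card (Sym2 (Fin n)), by rintro _ ⟨G, -, rfl⟩; exact Set.ncard_le_card _⟩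
    ⟨H, h, rfl⟩

namespace SimpleGraph

variable {α : Type u} {β : Type v}

def deleteIncident (G : SimpleGraph β) (S : Finset β) : SimpleGraph β where
  Adj x y := G.Adj x y ∧ x ∉ S ∧ y ∉ S
  symm := ⟨fun _ _ h => ⟨h.1.symm, h.2.2, h.2.1⟩⟩
  loopless := ⟨fun x h => G.loopless.irrefl x h.1⟩

def ContainsOutside (F : SimpleGraph α) (G : SimpleGraph β) (S : Finset β) : Prop :=
  ∃ c : GraphCopy F G, ∀ x, c.toFun x ∉ S

variable [Fintype β]

lemma ncard_edgeSet_le_card_mul_card (G : SimpleGraph β) :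
    G.edgeSet.ncard ≤ Fintype.card β * Fintype.card β := by
  calc G.edgeSet.ncard ≤ Nat.card (Sym2 β) := Set.ncard_le_card _
    _ = (Fintype.card β + 1).choose 2 := by rw [Nat.card_eq_fintype_card, Sym2.card]
    _ ≤ _ := by
      rw [Nat.choose_two_right, Nat.add_sub_cancel]; exact Nat.div_le_of_le_mul (by nlinarith)

variable [DecidableEq β]

lemma ncard_edgeSet_le_deleteIncident_add (G : SimpleGraph β) (S : Finset β) :
    G.edgeSet.ncard ≤ (G.deleteIncident S).edgeSet.ncard + S.card * Fintype.card β := by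
  set B := (S ×ˢ Finset.univ).image fun p : β × β => s(p.1, p.2)
  have hsub : G.edgeSet ⊆ (G.deleteIncident S).edgeSet ∪ ↑B := by
    intro e he
    induction e using Sym2.ind with | _ x y => ?_
    have hxy : G.Adj x y := he
    by_cases hx : x ∈ S
    · exact Or.inr (Finset.mem_image.2 ⟨(x, y), by simpa using hx, rfl⟩)
    by_cases hy : y ∈ S
    · exact Or.inr (Finset.mem_image.2 ⟨(y, x), by simpa using hy, Sym2.eq_swap⟩)
    exact Or.inl ⟨hxy, hx, hy⟩
  have hB : B.card ≤ S.card * Fintype.card β :=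
    Finset.card_image_le.trans (by rw [Finset.card_product, Finset.card_univ])
  calc G.edgeSet.ncard ≤ ((G.deleteIncident S).edgeSet ∪ ↑B).ncard :=
        Set.ncard_le_ncard hsub (Set.toFinite _)
    _ ≤ (G.deleteIncident S).edgeSet.ncard + B.card :=
        (Set.ncard_union_le _ _).trans_eq (by rw [Set.ncard_coe_finset])
    _ ≤ _ := by gcongr

lemma exists_pairwise_disjoint_copies (G : SimpleGraph β) {m : ℕ} :
    ∀ {k : ℕ} {V : Fin k → Type u} (F : ∀ i, SimpleGraph (V i)),
      (∀ i (S : Finset β), S.card ≤ m → (F i).ContainsOutside G S) →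
      ∀ S : Finset β, S.card + ∑ i, Nat.card (V i) ≤ m →
      ∃ c : ∀ i, GraphCopy (F i) G, (∀ i x, (c i).toFun x ∉ S) ∧
        Pairwise fun i j => Disjoint (Set.range (c i).toFun) (Set.range (c j).toFun)
  | 0, _, _, _, _, _ => ⟨fun i => i.elim0, fun i => i.elim0, fun i => i.elim0⟩
  | k + 1, V, F, hF, S, hS => by
    rw [Fin.sum_univ_succ] at hS
    obtain ⟨c₀, hc₀⟩ := hF 0 S (by omega)
    have hfin := Set.toFinite (Set.range c₀.toFun)
    set T := S ∪ hfin.toFinset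
    have hT : T.card ≤ S.card + Nat.card (V 0) := by
      rw [← Set.ncard_range_of_injective c₀.inj, Set.ncard_eq_toFinset_card _ hfin]
      exact Finset.card_union_le _ _
    obtain ⟨c, hcT, hc⟩ := exists_pairwise_disjoint_copies G (fun i => F i.succ)
      (fun i => hF i.succ) T (by omega)
    have hc₀c : ∀ i, Disjoint (Set.range c₀.toFun) (Set.range (c i).toFun) := by
      refine fun i => Set.disjoint_left.2 ?_
      rintro _ ⟨x, rfl⟩ ⟨y, hy⟩
      exact hcT i y (Finset.mem_union_right _ (by simpa using ⟨x, hy.symm⟩))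
    refine ⟨Fin.cons c₀ c, Fin.cases hc₀ fun i x hx => hcT i x (Finset.mem_union_left _ hx), ?_⟩
    exact pairwise_fin_succ_iff.2 ⟨fun i => (hc₀c i).symm, hc₀c, hc⟩

lemma containsOutside_of_contains_deleteIncident {F : SimpleGraph α} {G : SimpleGraph β}
    {S : Finset β} (hF : Contains F (G.deleteIncident S))
    (hS : S.card + 2 * Nat.card α ≤ Fintype.card β) : F.ContainsOutside G S := by
  obtain ⟨c⟩ := hF
  have : Fintype α := @Fintype.ofFinite α (Finite.of_injective _ c.inj)
  classical
  set fresh := (S ∪ Finset.univ.image c.toFun)ᶜ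
  have hfresh : ∀ y ∈ fresh, y ∉ S ∧ ∀ x, c.toFun x ≠ y := by
    intro y hy
    simp only [fresh, Finset.mem_compl, Finset.mem_union, Finset.mem_image] at hy
    push Not at hy
    exact ⟨hy.1, fun x => hy.2 x (Finset.mem_univ x)⟩
  obtain ⟨f⟩ : Nonempty ({x // c.toFun x ∈ S} ↪ fresh) := by
    refine Function.Embedding.nonempty_of_card_le ?_
    have h₁ := Finset.card_union_le S (Finset.univ.image c.toFun)
    have h₂ : (Finset.univ.image c.toFun).card ≤ Fintype.card α := Finset.card_image_le
    have h₃ := Fintype.card_subtype_le fun x => c.toFun x ∈ S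
    rw [Fintype.card_coe, Finset.card_compl]
    rw [Nat.card_eq_fintype_card] at hS
    omega
  refine ⟨⟨fun x => if h : c.toFun x ∈ S then f ⟨x, h⟩ else c.toFun x, ?_, ?_⟩, ?_⟩
  · refine Function.Injective.dite _ (Subtype.val_injective.comp f.injective)
      (c.inj.comp Subtype.val_injective) fun {x x'} => ?_
    exact fun h => (hfresh _ (f ⟨x, _⟩).2).2 x' h.symm
  · intro a b hab
    obtain ⟨hG, ha, hb⟩ := c.adj hab
    simpa only [dif_neg ha, dif_neg hb] using hG
  · intro x
    by_cases hx : c.toFun x ∈ S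
    · simpa only [dif_pos hx] using (hfresh _ (f ⟨x, hx⟩).2).1
    · simpa only [dif_neg hx] using hx

end SimpleGraph

theorem stmt5_general {k : ℕ} {V : Fin k → Type u} (F : ∀ i, SimpleGraph (V i)) :
    ∃ C : ℕ, ∀ n : ℕ, ∀ G : SimpleGraph (Fin n),
      (¬ ∃ c : ∀ i, GraphCopy (F i) G, ∀ i j : Fin k, i ≠ j →
        Disjoint (Set.range (c i).toFun) (Set.range (c j).toFun)) →
      G.edgeSet.ncard ≤ (Finset.univ.sup fun i => exNum n (F i)) + C * n := by
  set M := ∑ i, Nat.card (V i)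
  refine ⟨3 * M, fun n G hG => ?_⟩
  obtain ⟨j, S, hSM, hS⟩ : ∃ j S, S.card ≤ M ∧ ¬ (F j).ContainsOutside G S := by
    by_contra! h
    obtain ⟨c, -, hc⟩ := G.exists_pairwise_disjoint_copies F h ∅ (by simp [M])
    exact hG ⟨c, hc⟩
  have hVj : Nat.card (V j) ≤ M :=
    Finset.single_le_sum (f := fun i => Nat.card (V i)) (by simp) (Finset.mem_univ j)
  have hex : exNum n (F j) ≤ Finset.univ.sup fun i => exNum n (F i) :=
    Finset.le_sup (f := fun i => exNum n (F i)) (Finset.mem_univ j)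
  by_cases hn : S.card + 2 * Nat.card (V j) ≤ n
  · have hfree : ¬ Contains (F j) (G.deleteIncident S) := fun h =>
      hS (containsOutside_of_contains_deleteIncident h (by simpa using hn))
    have h₁ := ncard_edgeSet_le_exNum_s5 _ _ hfree
    have h₂ := G.ncard_edgeSet_le_deleteIncident_add S
    have h₃ : S.card * n ≤ 3 * M * n := Nat.mul_le_mul_right n (by omega)
    simp only [Fintype.card_fin] at h₂
    omega
  · have h₁ := G.ncard_edgeSet_le_card_mul_card
    have h₂ : n * n ≤ 3 * M * n := Nat.mul_le_mul_right n (by omega)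
    simp only [Fintype.card_fin] at h₁
    omega

/-- If `F` is the vertex-disjoint union of `F_1, …, F_k` (each with an
edge), then every `n`-vertex `F`-free graph has at most `max_i ex(n, F_i) + C n` edges. -/
theorem stmt5 {k : ℕ} (hk : 1 ≤ k) {V : Fin k → Type u} (F : ∀ i, SimpleGraph (V i))
    (hF : ∀ i, ∃ a b : V i, (F i).Adj a b) :
    ∃ C : ℕ, ∀ n : ℕ, ∀ G : SimpleGraph (Fin n),
      (¬ ∃ c : ∀ i, GraphCopy (F i) G, ∀ i j : Fin k, i ≠ j →
        Disjoint (Set.range (c i).toFun) (Set.range (c j).toFun)) →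
      G.edgeSet.ncard ≤ (Finset.univ.sup fun i => exNum n (F i)) + C * n :=
  stmt5_general F
end

section
/- Let F_i and F_j be graphs with at least one edge, and let G_0 be a graph on n-1 vertices containing neither F_i nor F_j as a subgraph. Let G be obtained from G_0 by adding one new universal vertex v adjacent to all vertices of G_0. Then G contains no two vertex-disjoint subgraphs, one isomorphic to F_i and one isomorphic to F_j, and the number of triangles in G is at least the number of edges of G_0. -/
/-!
Of two vertex-disjoint copies in the cone over `G0`, at least one misses the apex and hence is a
copy inside `G0`. Every edge `uw` of `G0` spans the triangle `{apex, u, w}`, and distinct edges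
give distinct triangles.
-/

open SimpleGraph

universe u v

section GraphCopy

variable {α : Type*} {ι : Type*} {β : Type*} {F : SimpleGraph α} {K : SimpleGraph ι}
  {H : SimpleGraph β}

theorem GraphCopy.contains_of_disjoint_range_inl (c : GraphCopy F (gJoin K H))
    (h : Disjoint (Set.range c.toFun) (Set.range Sum.inl)) : Contains F H := by
  have hinr : ∀ a, c.toFun a ∈ Set.range Sum.inr := fun a =>
    Set.compl_range_inl.subset (h.subset_compl_right ⟨a, rfl⟩)
  choose g hg using hinr
  refine ⟨⟨g, fun a b hab => c.inj (by rw [← hg, ← hg, hab]), fun {a b} hab => ?_⟩⟩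
  have := c.adj hab
  rwa [← hg, ← hg] at this

theorem not_exists_disjoint_copies_gJoin_unique [Unique ι] {γ : Type*} {F' : SimpleGraph γ}
    (hF : ¬ Contains F H) (hF' : ¬ Contains F' H) :
    ¬ ∃ (c : GraphCopy F (gJoin K H)) (c' : GraphCopy F' (gJoin K H)),
      Disjoint (Set.range c.toFun) (Set.range c'.toFun) := by
  rintro ⟨c, c', hcc'⟩
  by_cases hapex : Sum.inl default ∈ Set.range c.toFun
  · refine hF' (c'.contains_of_disjoint_range_inl ?_)
    rw [Set.range_unique (f := Sum.inl), Set.disjoint_singleton_right]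
    exact Set.disjoint_left.mp hcc' hapex
  · refine hF (c.contains_of_disjoint_range_inl ?_)
    rwa [Set.range_unique (f := Sum.inl), Set.disjoint_singleton_right]

end GraphCopy

theorem ncard_edgeSet_le_ncard_cliqueSet_three_gJoin {ι β : Type*} [Finite ι] [Finite β]
    (K : SimpleGraph ι) (H : SimpleGraph β) (apex : ι) :
    H.edgeSet.ncard ≤ ((gJoin K H).cliqueSet 3).ncard := by
  classical
  let cone : Sym2 β → Finset (ι ⊕ β) := fun e => insert (Sum.inl apex) (e.map Sum.inr).toFinset
  have mem_cone (e : Sym2 β) (b : β) : Sum.inr b ∈ cone e ↔ b ∈ e := by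
    simp [cone, Sym2.mem_toFinset]
  refine Set.ncard_le_ncard_of_injOn cone ?_ ?_
  · rintro ⟨u, w⟩ huw
    simp only [cone, Sym2.map_mk, Sym2.toFinset_mk_eq, mem_cliqueSet_iff]
    exact is3Clique_triple_iff.2 ⟨trivial, trivial, huw⟩
  · intro e _ e' _ hee'
    exact Sym2.ext fun b => by rw [← mem_cone, hee', mem_cone]

theorem stmt7_general {α : Type u} {β : Type v} (Fi : SimpleGraph α) (Fj : SimpleGraph β)
    {V : Type u} [Fintype V]
    (G0 : SimpleGraph V) (h0i : ¬ Contains Fi G0) (h0j : ¬ Contains Fj G0) :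
    (¬ ∃ (ci : GraphCopy Fi (gJoin (⊤ : SimpleGraph (Fin 1)) G0))
        (cj : GraphCopy Fj (gJoin (⊤ : SimpleGraph (Fin 1)) G0)),
        Disjoint (Set.range ci.toFun) (Set.range cj.toFun))
    ∧ G0.edgeSet.ncard ≤ ((gJoin (⊤ : SimpleGraph (Fin 1)) G0).cliqueSet 3).ncard :=
  ⟨not_exists_disjoint_copies_gJoin_unique h0i h0j,
    ncard_edgeSet_le_ncard_cliqueSet_three_gJoin _ G0 0⟩

/-- Adding a universal vertex to an `{F_i, F_j}`-free graph yields a graph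
with no vertex-disjoint copies of `F_i` and `F_j`, having at least `|E(G_0)|` triangles. -/
theorem stmt7 {α : Type u} {β : Type v} (Fi : SimpleGraph α) (Fj : SimpleGraph β)
    (hFi : ∃ a b : α, Fi.Adj a b) (hFj : ∃ a b : β, Fj.Adj a b)
    {V : Type u} [Fintype V] (n : ℕ) (hV : Fintype.card V = n - 1)
    (G0 : SimpleGraph V) (h0i : ¬ Contains Fi G0) (h0j : ¬ Contains Fj G0) :
    (¬ ∃ (ci : GraphCopy Fi (gJoin (⊤ : SimpleGraph (Fin 1)) G0))
        (cj : GraphCopy Fj (gJoin (⊤ : SimpleGraph (Fin 1)) G0)),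
        Disjoint (Set.range ci.toFun) (Set.range cj.toFun))
    ∧ G0.edgeSet.ncard ≤ ((gJoin (⊤ : SimpleGraph (Fin 1)) G0).cliqueSet 3).ncard :=
  stmt7_general Fi Fj G0 h0i h0j
end

section
/- Let s ≥ t ≥ 2 and k ≥ 2 be integers and set x = ⌈(kt - s)/(k - 1)⌉ - 1. There exists a constant C = C(s, t, k) such that every n-vertex graph with no k pairwise vertex-disjoint copies of K_t contains at most C·n^x copies of K_s. -/
open SimpleGraph

universe u v

/-!
Greedily pick `s`-cliques `S₀, S₁, …`, each with at least `x + 1` vertices outside the earlier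
ones. If this runs for `k` rounds, any `j` of the chosen cliques cover at least
`s + (j - 1)(x + 1) ≥ j t` vertices (this is where `x + 1 = ⌈(kt - s)/(k - 1)⌉` enters), so by
Hall's theorem the cliques have pairwise disjoint `t`-subsets: `k` disjoint copies of `K_t`.
Otherwise it stops after fewer than `k` rounds, and every `s`-clique is a subset of the union `W`
of the chosen cliques (`|W| ≤ (k - 1)s`) plus at most `x` further vertices, which leaves at most
`2^|W| (x + 1) n^x` possibilities.
-/

open Finset Function

theorem ceil_threshold_bounds {s t k x : ℕ} (hst : t ≤ s) (ht : 1 ≤ t) (hk : 2 ≤ k)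
    (hx : x = (k * t - s + k - 2) / (k - 1) - 1) :
    k * t ≤ s + (k - 1) * (x + 1) ∧ x + 1 ≤ t := by
  obtain ⟨d, rfl⟩ : ∃ d, k = d + 1 := ⟨k - 1, by omega⟩
  have hd : 0 < d := by omega
  simp only [Nat.add_sub_cancel, add_mul, one_mul] at hx ⊢
  set q := (d * t + t - s + (d + 1) - 2) / d
  have hlt : d * t + t - s + (d + 1) - 2 < d * q + d := by
    simpa [mul_add] using Nat.lt_mul_div_succ (d * t + t - s + (d + 1) - 2) hd
  have hle : q < t + 1 :=
    (Nat.div_lt_iff_lt_mul hd).mpr (by rw [add_mul, one_mul, Nat.mul_comm t d]; omega)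
  subst hx
  rcases Nat.eq_zero_or_pos q with h0 | hpos
  · simp only [h0, mul_zero, zero_add] at hlt ⊢
    omega
  · rw [Nat.sub_add_cancel hpos]
    omega

theorem mul_le_add_pred_mul_of_le {s t k m ρ : ℕ} (hm : 1 ≤ m) (hmk : m ≤ k) (hρt : ρ ≤ t)
    (hkt : k * t ≤ s + (k - 1) * ρ) : m * t ≤ s + (m - 1) * ρ := by
  obtain ⟨d, rfl⟩ : ∃ d, k = m + d := ⟨k - m, by omega⟩
  obtain ⟨m, rfl⟩ : ∃ m', m = m' + 1 := ⟨m - 1, by omega⟩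
  simp only [Nat.add_sub_cancel] at hkt ⊢
  have : m + 1 + d - 1 = m + d := by omega
  rw [this] at hkt
  nlinarith

theorem hasDisjCopies_top_of_injective {V : Type*} {G : SimpleGraph V} {k t : ℕ}
    (f : Fin k → Set V) (hf : ∀ i, G.IsClique (f i)) (g : Fin k × Fin t → V)
    (hg : Injective g) (hgf : ∀ p, g p ∈ f p.1) :
    HasDisjCopies (⊤ : SimpleGraph (Fin t)) G k := by
  refine ⟨fun i => ⟨fun l => g (i, l), hg.comp (Prod.mk_right_injective i), ?_⟩, ?_⟩
  · intro a b hab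
    exact hf i (hgf (i, a)) (hgf (i, b)) (hg.ne (by simpa using hab))
  · intro i j hij
    rw [Set.disjoint_left]
    rintro _ ⟨l, rfl⟩ ⟨l', hl'⟩
    exact hij (congrArg Prod.fst (hg hl')).symm

section GreedyChain

variable {V : Type*} [DecidableEq V]

def IsGreedyChain (𝒜 : Set (Finset V)) (ρ : ℕ) (f : ℕ → Finset V) (m : ℕ) : Prop :=
  ∀ i < m, f i ∈ 𝒜 ∧ ρ ≤ (f i \ (range i).biUnion f).card

theorem exists_isGreedyChain_or_saturated (𝒜 : Set (Finset V)) (ρ : ℕ) : ∀ k : ℕ,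
    (∃ f, IsGreedyChain 𝒜 ρ f k) ∨
      ∃ m < k, ∃ f, IsGreedyChain 𝒜 ρ f m ∧ ∀ S ∈ 𝒜, (S \ (range m).biUnion f).card < ρ
  | 0 => Or.inl ⟨fun _ => ∅, fun i hi => absurd hi (Nat.not_lt_zero i)⟩
  | k + 1 => by
    rcases exists_isGreedyChain_or_saturated 𝒜 ρ k with ⟨f, hf⟩ | ⟨m, hmk, f, hf, hsat⟩
    · by_cases hext : ∃ S ∈ 𝒜, ρ ≤ (S \ (range k).biUnion f).card
      · obtain ⟨S, hS, hnew⟩ := hext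
        refine Or.inl ⟨update f k S, fun i hi => ?_⟩
        have hprefix : (range i).biUnion (update f k S) = (range i).biUnion f :=
          biUnion_congr rfl fun j hj => update_of_ne (by grind) _ _
        rcases Nat.lt_succ_iff_lt_or_eq.mp hi with hi | rfl
        · simpa [hprefix, update_of_ne hi.ne] using hf i hi
        · simpa [hprefix] using ⟨hS, hnew⟩
      · push Not at hext
        exact Or.inr ⟨k, k.lt_succ_self, f, hf, hext⟩
    · exact Or.inr ⟨m, by omega, f, hf, hsat⟩

variable {𝒜 : Set (Finset V)} {ρ s : ℕ} {f : ℕ → Finset V} {m : ℕ}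

theorem IsGreedyChain.card_biUnion_range_le (hf : IsGreedyChain 𝒜 ρ f m)
    (h𝒜 : ∀ S ∈ 𝒜, S.card ≤ s) : ((range m).biUnion f).card ≤ m * s :=
  calc ((range m).biUnion f).card ≤ ∑ i ∈ range m, (f i).card := card_biUnion_le
    _ ≤ ∑ _i ∈ range m, s := sum_le_sum fun i hi => h𝒜 _ (hf i (mem_range.mp hi)).1
    _ = m * s := by simp

theorem IsGreedyChain.add_mul_le_card_biUnion (hf : IsGreedyChain 𝒜 ρ f m)
    (h𝒜 : ∀ S ∈ 𝒜, s ≤ S.card) {J : Finset ℕ} (hJ : J ⊆ range m) (hne : J.Nonempty) :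
    s + (J.card - 1) * ρ ≤ (J.biUnion f).card := by
  induction J using Finset.induction_on_max with
  | empty => simp at hne
  | insert a J hlt ih =>
    obtain ⟨haA, hnew⟩ := hf a (mem_range.mp (hJ (mem_insert_self a J)))
    rcases J.eq_empty_or_nonempty with rfl | hJne
    · simpa using h𝒜 _ haA
    have hprev : J.biUnion f ⊆ (range a).biUnion f :=
      biUnion_subset_biUnion_of_subset_left _ fun j hj => mem_range.mpr (hlt j hj)
    have hdisj : Disjoint (J.biUnion f) (f a \ (range a).biUnion f) :=
      disjoint_sdiff.mono_left hprev
    have hsub : J.biUnion f ∪ (f a \ (range a).biUnion f) ⊆ (insert a J).biUnion f := by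
      rw [biUnion_insert]
      exact union_subset subset_union_right (sdiff_subset.trans subset_union_left)
    have hcard := card_le_card hsub
    rw [card_union_of_disjoint hdisj] at hcard
    have hIH := ih ((subset_insert a J).trans hJ) hJne
    obtain ⟨c, hc⟩ : ∃ c, J.card = c + 1 := Nat.exists_eq_succ_of_ne_zero hJne.card_pos.ne'
    rw [hc, Nat.add_sub_cancel] at hIH
    rw [card_insert_of_notMem fun haJ => (hlt a haJ).false, hc, Nat.add_sub_cancel, add_mul,
      one_mul]
    omega

theorem IsGreedyChain.exists_injective_mem {k t : ℕ} (hf : IsGreedyChain 𝒜 ρ f k)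
    (h𝒜 : ∀ S ∈ 𝒜, s ≤ S.card) (hρt : ρ ≤ t) (hkt : k * t ≤ s + (k - 1) * ρ) :
    ∃ g : Fin k × Fin t → V, Injective g ∧ ∀ p, g p ∈ f p.1 := by
  refine (all_card_le_biUnion_card_iff_exists_injective fun p : Fin k × Fin t => f p.1).mp
    fun E => ?_
  rcases E.eq_empty_or_nonempty with rfl | hE
  · simp
  set P := (E.image Prod.fst).map Fin.valEmbedding
  have hPk : P ⊆ range k := fun i hi => by
    obtain ⟨j, -, rfl⟩ := mem_map.mp hi
    exact mem_range.mpr j.isLt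
  have hEP : E.card ≤ P.card * t :=
    calc E.card ≤ (E.image Prod.fst ×ˢ E.image Prod.snd).card := card_le_card subset_product
      _ ≤ P.card * t := by
        rw [card_product, card_map]
        exact Nat.mul_le_mul_left _ ((card_le_univ _).trans_eq (Fintype.card_fin t))
  have hunion : E.biUnion (fun p => f p.1) = P.biUnion f := by
    ext v
    simp [P]
  calc E.card ≤ P.card * t := hEP
    _ ≤ s + (P.card - 1) * ρ :=
      mul_le_add_pred_mul_of_le (hE.image _).map.card_pos (by simpa using card_le_card hPk)
        hρt hkt
    _ ≤ (P.biUnion f).card := hf.add_mul_le_card_biUnion h𝒜 hPk (hE.image _).map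
    _ = _ := by rw [hunion]

end GreedyChain

theorem card_filter_card_le_le_mul_pow (V : Type*) [Fintype V] [DecidableEq V] [Nonempty V]
    (x : ℕ) :
    (univ.filter fun T : Finset V => T.card ≤ x).card ≤ (x + 1) * Fintype.card V ^ x := by
  have hsplit : (univ.filter fun T : Finset V => T.card ≤ x) =
      (range (x + 1)).biUnion fun i => powersetCard i univ := by
    ext T
    simp
  calc _ ≤ ∑ i ∈ range (x + 1), (powersetCard i (univ : Finset V)).card :=
        hsplit ▸ card_biUnion_le
    _ ≤ ∑ _i ∈ range (x + 1), Fintype.card V ^ x := sum_le_sum fun i hi => by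
        rw [card_powersetCard, card_univ]
        exact (Nat.choose_le_pow _ _).trans
          (Nat.pow_le_pow_right Fintype.card_pos (Nat.lt_succ_iff.mp (mem_range.mp hi)))
    _ = (x + 1) * Fintype.card V ^ x := by simp

theorem ncard_le_of_card_sdiff_le {V : Type*} [Fintype V] [DecidableEq V] [Nonempty V]
    (𝒜 : Set (Finset V)) (W : Finset V) {x : ℕ} (h : ∀ S ∈ 𝒜, (S \ W).card ≤ x) :
    𝒜.ncard ≤ 2 ^ W.card * ((x + 1) * Fintype.card V ^ x) := by
  have hinj : Set.InjOn (fun S => (S ∩ W, S \ W)) 𝒜 := fun S _ S' _ hSS' => by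
    obtain ⟨hin, hout⟩ := Prod.mk.inj hSS'
    rw [← sdiff_union_inter S W, ← sdiff_union_inter S' W, hin, hout]
  calc 𝒜.ncard
      ≤ ((W.powerset ×ˢ univ.filter fun T : Finset V => T.card ≤ x : Finset _) : Set _).ncard :=
        Set.ncard_le_ncard_of_injOn _ (fun S hS => by simpa using h S hS) hinj
    _ ≤ 2 ^ W.card * ((x + 1) * Fintype.card V ^ x) := by
        rw [Set.ncard_coe_finset, card_product, card_powerset]
        exact Nat.mul_le_mul_left _ (card_filter_card_le_le_mul_pow V x)

theorem ncard_cliqueSet_le_of_not_hasDisjCopies {V : Type*} [Fintype V] [DecidableEq V]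
    [Nonempty V] {G : SimpleGraph V} {s t k x : ℕ}
    (hG : ¬ HasDisjCopies (⊤ : SimpleGraph (Fin t)) G k) (hxt : x + 1 ≤ t)
    (hkt : k * t ≤ s + (k - 1) * (x + 1)) :
    (G.cliqueSet s).ncard ≤ 2 ^ ((k - 1) * s) * ((x + 1) * Fintype.card V ^ x) := by
  rcases exists_isGreedyChain_or_saturated (G.cliqueSet s) (x + 1) k with
    ⟨f, hf⟩ | ⟨m, hmk, f, hf, hsat⟩
  · obtain ⟨g, hg, hgf⟩ := hf.exists_injective_mem (fun S hS => hS.card_eq.ge) hxt hkt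
    exact (hG (hasDisjCopies_top_of_injective (fun i => f i)
      (fun i => (hf i i.isLt).1.isClique) g hg hgf)).elim
  · have hW : ((range m).biUnion f).card ≤ (k - 1) * s :=
      (hf.card_biUnion_range_le fun S hS => hS.card_eq.le).trans
        (Nat.mul_le_mul_right _ (by omega))
    calc (G.cliqueSet s).ncard
        ≤ 2 ^ ((range m).biUnion f).card * ((x + 1) * Fintype.card V ^ x) :=
          ncard_le_of_card_sdiff_le _ _ fun S hS => Nat.lt_succ_iff.mp (hsat S hS)
      _ ≤ 2 ^ ((k - 1) * s) * ((x + 1) * Fintype.card V ^ x) := by gcongr; norm_num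

/-- With `x = ⌈(kt-s)/(k-1)⌉ - 1`, every `n`-vertex graph with no `k`
disjoint copies of `K_t` has at most `C n^x` copies of `K_s`. -/
theorem stmt10 (s t k x : ℕ) (hst : t ≤ s) (ht : 2 ≤ t) (hk : 2 ≤ k)
    (hx : x = (k * t - s + k - 2) / (k - 1) - 1) :
    ∃ C : ℕ, ∀ n : ℕ, ∀ G : SimpleGraph (Fin n),
      ¬ HasDisjCopies (⊤ : SimpleGraph (Fin t)) G k →
      (G.cliqueSet s).ncard ≤ C * n ^ x := by
  obtain ⟨hkt, hxt⟩ := ceil_threshold_bounds hst (by omega) hk hx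
  refine ⟨2 ^ ((k - 1) * s) * (x + 1), fun n G hG => ?_⟩
  rcases n.eq_zero_or_pos with rfl | hn
  · rw [cliqueSet_eq_empty_iff.mpr (cliqueFree_of_card_lt (by rw [Fintype.card_fin]; omega)),
      Set.ncard_empty]
    exact Nat.zero_le _
  · have : Nonempty (Fin n) := ⟨⟨0, hn⟩⟩
    simpa [mul_assoc] using ncard_cliqueSet_le_of_not_hasDisjCopies hG hxt hkt
end

section
/- Let t ≥ 2 and let G be a K_t-free graph on n vertices. Then for every s < t, the number of copies of K_s in G is at most C(t-1, s) · (n/(t-1) + 1)^s, where C(·,·) denotes the binomial coefficient. -/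
/-!
Induct on `r`, bounding the number of `s`-cliques inside a vertex set `A` spanning no `K_{r+1}`
by `f_r(s, |A|)`, where `f_r(s, x) = C(r,s) (x/r + 1)^s`. For the step, let `A` span no `K_{r+2}`,
let `v` have maximum degree `d` inside `A` and let `N` be its neighbourhood in `A`. An
`(s+1)`-clique of `A` either lies in `N`, or contains some `u ∈ A \ N` and is then `u` together
with an `s`-clique of the neighbourhood of `u` in `A`. These neighbourhoods span no `K_{r+1}` and
have at most `d` vertices, so the count is at most `f_r(s+1, d) + (|A| - d) f_r(s, d)`. Pascal's
rule and Bernoulli's inequality `X^(s+1) + (s+1) X^s b ≤ (X + b)^(s+1)` at `X = d/r + 1` bound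
this by `f_{r+1}(s+1, |A|)`.
-/

open SimpleGraph

universe u v

open Finset

/-- `C(r,s)` choices of `s` parts of the Turán graph `T_r(x)`, each of at most `x/r + 1`
vertices. -/
noncomputable def cliqueCountBound (r s : ℕ) (x : ℝ) : ℝ :=
  r.choose s * (x / r + 1) ^ s

lemma cliqueCountBound_nonneg (r s : ℕ) {x : ℝ} (hx : 0 ≤ x) :
    0 ≤ cliqueCountBound r s x := by
  unfold cliqueCountBound; positivity

lemma cliqueCountBound_mono (r s : ℕ) {x y : ℝ} (hx : 0 ≤ x) (hxy : x ≤ y) :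
    cliqueCountBound r s x ≤ cliqueCountBound r s y := by
  unfold cliqueCountBound; gcongr

lemma cliqueCountBound_succ_add_le (r s : ℕ) {d n : ℝ} (hd : 0 ≤ d) (hn : 0 ≤ n) :
    cliqueCountBound r (s + 1) d + (n - d) * cliqueCountBound r s d ≤
      cliqueCountBound (r + 1) (s + 1) n := by
  unfold cliqueCountBound
  rcases r.eq_zero_or_pos with rfl | hr
  · rcases s with _ | s
    · simpa using (show n - d ≤ n + 1 by linarith)
    · simp [Nat.choose_eq_zero_of_lt]
  set X := d / r + 1
  have hX : 0 ≤ X := by positivity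
  have hrX : r * X = d + r := by simp only [X]; field_simp
  have hsucc : ((r : ℝ) + 1) * r.choose s = (r + 1).choose (s + 1) * (s + 1) := by
    exact_mod_cast Nat.add_one_mul_choose_eq r s
  have hpascal : ((r + 1).choose (s + 1) : ℝ) = r.choose s + r.choose (s + 1) := by
    exact_mod_cast Nat.choose_succ_succ' r s
  set b := (n + r) / (r + 1) - X
  calc (r.choose (s + 1) : ℝ) * X ^ (s + 1) + (n - d) * (r.choose s * X ^ s)
      = (r + 1).choose (s + 1) * (X ^ (s + 1) + (s + 1 : ℕ) * X ^ s * b) := by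
        have hb : (r + 1) * b = n + r - (r + 1) * X := by simp only [b]; field_simp
        apply mul_left_cancel₀ (by positivity : (r : ℝ) + 1 ≠ 0)
        push_cast
        linear_combination (-((r : ℝ) + 1) * X ^ (s + 1)) * hpascal + X ^ s * (n - d - X) * hsucc
          + ((r + 1).choose (s + 1) : ℝ) * (s + 1) * X ^ s * (hrX - hb)
    _ ≤ (r + 1).choose (s + 1) * ((n + r) / (r + 1)) ^ (s + 1) := by
        have hb : 0 ≤ 2 * X + b := by
          have : 0 ≤ (n + r) / (r + 1) := by positivity
          linarith
        gcongr
        simpa [b] using pow_add_mul_le_add_pow hX hb (s + 1)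
    _ ≤ (r + 1).choose (s + 1) * (n / (r + 1 : ℕ) + 1) ^ (s + 1) := by
        rw [Nat.cast_succ, div_add_one (by positivity)]
        gcongr
        linarith

namespace SimpleGraph

variable {V : Type*} [DecidableEq V] (G : SimpleGraph V) [DecidableRel G.Adj]

def cliqueFinsetOn (A : Finset V) (n : ℕ) : Finset (Finset V) :=
  {S ∈ A.powerset | G.IsNClique n S}

variable {G}

@[simp]
lemma mem_cliqueFinsetOn {A S : Finset V} {n : ℕ} :
    S ∈ G.cliqueFinsetOn A n ↔ S ⊆ A ∧ G.IsNClique n S := by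
  simp [cliqueFinsetOn]

@[simp]
lemma cliqueFinsetOn_zero (A : Finset V) : G.cliqueFinsetOn A 0 = {∅} := by
  ext S; simp +contextual [isNClique_zero]

lemma cliqueFinsetOn_univ [Fintype V] (n : ℕ) : G.cliqueFinsetOn univ n = G.cliqueFinset n := by
  ext S; simp

lemma CliqueFreeOn.cliqueFinsetOn_eq_empty {A : Finset V} {n : ℕ} (h : G.CliqueFreeOn A n) :
    G.cliqueFinsetOn A n = ∅ :=
  eq_empty_of_forall_notMem fun _ hS ↦ h (coe_subset.2 (mem_cliqueFinsetOn.1 hS).1)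
    (mem_cliqueFinsetOn.1 hS).2

lemma card_cliqueFinsetOn_succ_mem_le (A : Finset V) (n : ℕ) (a : V) :
    #{S ∈ G.cliqueFinsetOn A (n + 1) | a ∈ S} ≤
      #(G.cliqueFinsetOn {x ∈ A | G.Adj a x} n) := by
  refine card_le_card_of_injOn (·.erase a) (fun S hS ↦ ?_) fun S hS T hT hST ↦ ?_
  · simp only [coe_filter, mem_cliqueFinsetOn, Set.mem_ofPred_eq] at hS
    obtain ⟨⟨hSA, hS⟩, haS⟩ := hS
    refine mem_cliqueFinsetOn.2 ⟨fun x hx ↦ ?_, hS.erase_of_mem haS⟩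
    obtain ⟨hxa, hxS⟩ := mem_erase.1 hx
    exact mem_filter.2 ⟨hSA hxS, hS.isClique haS hxS (Ne.symm hxa)⟩
  · simp only [coe_filter, mem_cliqueFinsetOn, Set.mem_ofPred_eq] at hS hT
    rw [← insert_erase hS.2, ← insert_erase hT.2]
    exact congrArg (insert a) hST

lemma card_cliqueFinsetOn_succ_le (A B : Finset V) (n : ℕ) :
    #(G.cliqueFinsetOn A (n + 1)) ≤ #(G.cliqueFinsetOn B (n + 1)) +
      ∑ a ∈ A \ B, #(G.cliqueFinsetOn {x ∈ A | G.Adj a x} n) := by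
  have hcover : G.cliqueFinsetOn A (n + 1) ⊆ G.cliqueFinsetOn B (n + 1) ∪
      (A \ B).biUnion fun a ↦ {S ∈ G.cliqueFinsetOn A (n + 1) | a ∈ S} := by
    intro S hS
    obtain ⟨hSA, hS'⟩ := mem_cliqueFinsetOn.1 hS
    by_cases hSB : S ⊆ B
    · exact mem_union_left _ (mem_cliqueFinsetOn.2 ⟨hSB, hS'⟩)
    · obtain ⟨a, haS, haB⟩ := not_subset.1 hSB
      exact mem_union_right _ <| mem_biUnion.2
        ⟨a, mem_sdiff.2 ⟨hSA haS, haB⟩, mem_filter.2 ⟨hS, haS⟩⟩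
  calc #(G.cliqueFinsetOn A (n + 1))
      ≤ _ := card_le_card hcover
    _ ≤ _ := card_union_le _ _
    _ ≤ _ := by
      gcongr
      exact card_biUnion_le.trans (sum_le_sum fun a _ ↦ card_cliqueFinsetOn_succ_mem_le A n a)

lemma card_cliqueFinsetOn_le_cliqueCountBound {r : ℕ} {A : Finset V}
    (hA : G.CliqueFreeOn A (r + 1)) (s : ℕ) :
    (#(G.cliqueFinsetOn A s) : ℝ) ≤ cliqueCountBound r s #A := by
  induction r generalizing A s with
  | zero =>
    rcases s with _ | s
    · simp [cliqueCountBound]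
    · rw [(CliqueFreeOn.mono G (by omega) hA).cliqueFinsetOn_eq_empty, card_empty, Nat.cast_zero]
      exact cliqueCountBound_nonneg _ _ (Nat.cast_nonneg _)
  | succ r ih =>
    rcases s with _ | s
    · simp [cliqueCountBound]
    rcases A.eq_empty_or_nonempty with rfl | hne
    · rw [CliqueFreeOn.cliqueFinsetOn_eq_empty (by simp), card_empty, Nat.cast_zero]
      exact cliqueCountBound_nonneg _ _ (Nat.cast_nonneg _)
    obtain ⟨v, hvA, hvmax⟩ := exists_max_image A (fun u ↦ #{x ∈ A | G.Adj u x}) hne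
    set N : V → Finset V := fun u ↦ {x ∈ A | G.Adj u x}
    have hN : ∀ u ∈ A, G.CliqueFreeOn (N u) (r + 1) := fun u hu ↦
      CliqueFreeOn.subset G (fun x hx ↦ by simpa [N] using hx) (CliqueFreeOn.of_succ G hA hu)
    have hNA : N v ⊆ A := filter_subset _ _
    have hsum : ∑ u ∈ A \ N v, (#(G.cliqueFinsetOn (N u) s) : ℝ) ≤
        (#A - #(N v)) * cliqueCountBound r s #(N v) := by
      rw [← Nat.cast_sub (card_le_card hNA), ← card_sdiff_of_subset hNA, ← nsmul_eq_mul,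
        ← sum_const]
      refine sum_le_sum fun u hu ↦ (ih (hN u (mem_sdiff.1 hu).1) s).trans ?_
      exact cliqueCountBound_mono _ _ (Nat.cast_nonneg _)
        (by exact_mod_cast hvmax u (mem_sdiff.1 hu).1)
    calc (#(G.cliqueFinsetOn A (s + 1)) : ℝ)
        ≤ #(G.cliqueFinsetOn (N v) (s + 1)) +
            ∑ u ∈ A \ N v, (#(G.cliqueFinsetOn (N u) s) : ℝ) := by
          exact_mod_cast card_cliqueFinsetOn_succ_le A (N v) s
      _ ≤ cliqueCountBound r (s + 1) #(N v) + (#A - #(N v)) * cliqueCountBound r s #(N v) :=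
          add_le_add (ih (hN v hvA) (s + 1)) hsum
      _ ≤ cliqueCountBound (r + 1) (s + 1) #A :=
          cliqueCountBound_succ_add_le r s (Nat.cast_nonneg _) (Nat.cast_nonneg _)

end SimpleGraph

theorem stmt17_general (t s n : ℕ)
    (G : SimpleGraph (Fin n)) (hG : G.CliqueFree t) :
    ((G.cliqueSet s).ncard : ℝ) ≤
      ((t - 1).choose s : ℝ) * ((n : ℝ) / ((t : ℝ) - 1) + 1) ^ s := by
  classical
  obtain ⟨r, rfl⟩ : ∃ r, t = r + 1 :=
    Nat.exists_eq_add_one_of_ne_zero (by rintro rfl; exact not_cliqueFree_zero hG)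
  have h := card_cliqueFinsetOn_le_cliqueCountBound (A := univ) (CliqueFree.cliqueFreeOn G hG) s
  rw [cliqueFinsetOn_univ, card_univ, Fintype.card_fin] at h
  rw [← coe_cliqueFinset, Set.ncard_coe_finset]
  simpa [cliqueCountBound] using h

/-- A `K_t`-free graph on `n` vertices has at most
`C(t-1,s)·(n/(t-1)+1)^s` copies of `K_s` for every `s < t`. -/
theorem stmt17 (t s n : ℕ) (ht : 2 ≤ t) (hst : s < t)
    (G : SimpleGraph (Fin n)) (hG : G.CliqueFree t) :
    ((G.cliqueSet s).ncard : ℝ) ≤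
      ((t - 1).choose s : ℝ) * ((n : ℝ) / ((t : ℝ) - 1) + 1) ^ s :=
  stmt17_general t s n G hG
end

section
/- Let G be a graph on n vertices with no k pairwise vertex-disjoint triangles, let L be the vertex set of a maximum family of disjoint triangles in G (consisting of triangles A_1, ..., A_r with r ≤ k-1), and call a triangle of G good if it has exactly one vertex in L. Then for each i, no two vertex-disjoint good triangles of G meet A_i in two different vertices of A_i. -/
open SimpleGraph

universe u v

/-! A good triangle meeting `A i` has its unique vertex in `L` inside `A i`, so it is disjoint
from every other `A j`. Hence two disjoint good triangles meeting `A i` can replace `A i` in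
the family, producing `r + 1` disjoint triangles and contradicting maximality. -/

theorem Pairwise.update {ι α : Type*} [DecidableEq ι] {R : α → α → Prop} [Std.Symm R]
    {f : ι → α} (hf : Pairwise (Function.onFun R f)) {i : ι} {a : α} (ha : ∀ j ≠ i, R a (f j)) :
    Pairwise (Function.onFun R (Function.update f i a)) := by
  intro j k hjk
  simp only [Function.onFun, Function.update_apply]
  split_ifs with hj hk hk
  · exact absurd (hj.trans hk.symm) hjk
  · exact ha k hk
  · exact Std.Symm.symm _ _ (ha j hj)
  · exact hf hjk

theorem Fin.pairwise_cons {α : Type*} {R : α → α → Prop} [Std.Symm R] {n : ℕ}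
    {a : α} {f : Fin n → α} (ha : ∀ j, R a (f j)) (hf : Pairwise (Function.onFun R f)) :
    Pairwise (Function.onFun R (Fin.cons a f : Fin (n + 1) → α)) := by
  intro j k hjk
  cases j using Fin.cases <;> cases k using Fin.cases
  · exact absurd rfl hjk
  · simpa [Function.onFun] using ha _
  · simpa [Function.onFun] using Std.Symm.symm _ _ (ha _)
  · simpa [Function.onFun] using hf (fun h => hjk (congrArg Fin.succ h))

theorem Finset.disjoint_of_card_inter_le_one {α : Type*} [DecidableEq α] {T L s t : Finset α}
    (hT : (T ∩ L).card ≤ 1) (hs : s ⊆ L) (ht : t ⊆ L) (hst : Disjoint s t)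
    (hTs : (T ∩ s).Nonempty) : Disjoint T t := by
  obtain ⟨x, hx⟩ := hTs
  obtain ⟨hxT, hxs⟩ := Finset.mem_inter.mp hx
  refine Finset.disjoint_left.mpr fun y hyT hyt => ?_
  have hxy : x = y := Finset.card_le_one.mp hT x (Finset.mem_inter.mpr ⟨hxT, hs hxs⟩) y
    (Finset.mem_inter.mpr ⟨hyT, ht hyt⟩)
  exact Finset.disjoint_left.mp hst hxs (hxy ▸ hyt)

theorem stmt18_general {V : Type u} [Fintype V] [DecidableEq V] (G : SimpleGraph V) (r : ℕ)
    (A : Fin r → Finset V) (hA : ∀ i, G.IsNClique 3 (A i))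
    (hdisj : ∀ i j : Fin r, i ≠ j → Disjoint (A i) (A j))
    (hmax : ¬ ∃ B : Fin (r + 1) → Finset V, (∀ i, G.IsNClique 3 (B i)) ∧
      ∀ i j : Fin (r + 1), i ≠ j → Disjoint (B i) (B j))
    (L : Finset V) (hL : L = Finset.univ.biUnion A) :
    ∀ i : Fin r, ∀ T₁ T₂ : Finset V, G.IsNClique 3 T₁ → G.IsNClique 3 T₂ →
      (T₁ ∩ L).card = 1 → (T₂ ∩ L).card = 1 → Disjoint T₁ T₂ →
      (T₁ ∩ A i).Nonempty → (T₂ ∩ A i).Nonempty → False := by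
  intro i T₁ T₂ h₁ h₂ hL₁ hL₂ h₁₂ hi₁ hi₂
  have hAL : ∀ j, A j ⊆ L := fun j => hL ▸ Finset.subset_biUnion_of_mem A (Finset.mem_univ j)
  have hT₁ : ∀ j ≠ i, Disjoint T₁ (A j) := fun j hj =>
    Finset.disjoint_of_card_inter_le_one hL₁.le (hAL i) (hAL j) (hdisj i j hj.symm) hi₁
  have hT₂ : ∀ j ≠ i, Disjoint T₂ (A j) := fun j hj =>
    Finset.disjoint_of_card_inter_le_one hL₂.le (hAL i) (hAL j) (hdisj i j hj.symm) hi₂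
  refine hmax ⟨Fin.cons T₂ (Function.update A i T₁), ?_, ?_⟩
  · simp only [Fin.forall_fin_succ, Fin.cons_zero, Fin.cons_succ, Function.forall_update_iff]
    exact ⟨h₂, h₁, fun j _ => hA j⟩
  · exact Fin.pairwise_cons (Function.forall_update_iff _ (p := fun _ => Disjoint T₂) |>.mpr
      ⟨h₁₂.symm, hT₂⟩) (Pairwise.update hdisj hT₁)

/-- If `A_1, …, A_r` is a maximum family of disjoint triangles
(`r ≤ k-1`) in a graph with no `k` disjoint triangles, then no two vertex-disjoint good
triangles (triangles with exactly one vertex in `L`) meet the same `A_i` in two different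
vertices. -/
theorem stmt18 {V : Type u} [Fintype V] [DecidableEq V] (G : SimpleGraph V) (k r : ℕ)
    (hk : 1 ≤ k) (hrk : r ≤ k - 1)
    (hfree : ¬ HasDisjTriangles G k)
    (A : Fin r → Finset V) (hA : ∀ i, G.IsNClique 3 (A i))
    (hdisj : ∀ i j : Fin r, i ≠ j → Disjoint (A i) (A j))
    (hmax : ¬ ∃ B : Fin (r + 1) → Finset V, (∀ i, G.IsNClique 3 (B i)) ∧
      ∀ i j : Fin (r + 1), i ≠ j → Disjoint (B i) (B j))
    (L : Finset V) (hL : L = Finset.univ.biUnion A) :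
    ∀ i : Fin r, ∀ T₁ T₂ : Finset V, G.IsNClique 3 T₁ → G.IsNClique 3 T₂ →
      (T₁ ∩ L).card = 1 → (T₂ ∩ L).card = 1 → Disjoint T₁ T₂ →
      (T₁ ∩ A i).Nonempty → (T₂ ∩ A i).Nonempty → False :=
  stmt18_general G r A hA hdisj hmax L hL
end
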